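/- arXiv:2004.11211 — 4 statements merged into one kernel-verified Lean document; each statement's English description precedes it below -/
import Mathlib

section
/- Lemma 3.1 (Lindeberg step under sublinear expectation). Let h : ℝ → ℝ be twice continuously differentiable with h, h', h'' bounded, and let ϰ > 0, κ > 0, n ≥ 1. Then for every x ∈ ℝ, Ê[h(x + ξ(x)/√n)] ≤ E[h(x + Z/√n)] + ϰ(μ̄−μ̲)/(2√n·σ̲) + (κ/(2n))·(σ̄²/σ̲² − 1) + Ê[δ(x, ξ(x)/√n | h)] − E[δ(x, Z/√n | h)], where Z is a standard normal random variable (E its classical expectation) and δ(x, y | h) := h(x+y) − h(x) − y·h'(x) − y²·h''(x)/2. -/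
open MeasureTheory ProbabilityTheory Set
open scoped ENNReal NNReal

noncomputable section

/-- A sublinear expectation space on a set `H` of real random variables. -/
structure SublinearExp (Ω : Type) where
  H : Set (Ω → ℝ)
  E : (Ω → ℝ) → ℝ
  const_mem : ∀ c : ℝ, (fun _ => c) ∈ H
  add_mem : ∀ {X Y : Ω → ℝ}, X ∈ H → Y ∈ H → X + Y ∈ H
  smul_mem : ∀ (c : ℝ) {X : Ω → ℝ}, X ∈ H → c • X ∈ H
  mono : ∀ {X Y : Ω → ℝ}, X ∈ H → Y ∈ H → (∀ ω, X ω ≤ Y ω) → E X ≤ E Y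
  const_eq : ∀ c : ℝ, E (fun _ => c) = c
  subadd : ∀ {X Y : Ω → ℝ}, X ∈ H → Y ∈ H → E (X + Y) ≤ E X + E Y
  homog : ∀ {c : ℝ}, 0 ≤ c → ∀ {X : Ω → ℝ}, X ∈ H → E (c • X) = c * E X

variable {Ω : Type}

/-- Upper expectation `Ê[Y]` of an arbitrary function, with value `+∞` if no dominating
element of `H` exists (`EReal`-valued). -/
def SublinearExp.uexpE (SE : SublinearExp Ω) (Y : Ω → ℝ) : EReal :=
  sInf {r : EReal | ∃ X ∈ SE.H, (∀ ω, Y ω ≤ X ω) ∧ r = (SE.E X : EReal)}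

def muLow (SE : SublinearExp Ω) (X₀ : Ω → ℝ) : ℝ := -(SE.E fun ω => -X₀ ω)
def muHigh (SE : SublinearExp Ω) (X₀ : Ω → ℝ) : ℝ := SE.E X₀
def varLow (SE : SublinearExp Ω) (X₀ : Ω → ℝ) (μ : ℝ) : ℝ :=
  -(SE.E fun ω => -((X₀ ω - μ) ^ 2))
def varHigh (SE : SublinearExp Ω) (X₀ : Ω → ℝ) (μ : ℝ) : ℝ :=
  SE.E fun ω => (X₀ ω - μ) ^ 2
def sigLow (SE : SublinearExp Ω) (X₀ : Ω → ℝ) : ℝ :=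
  sInf ((fun μ => Real.sqrt (varLow SE X₀ μ)) '' Set.Icc (muLow SE X₀) (muHigh SE X₀))
def sigHigh (SE : SublinearExp Ω) (X₀ : Ω → ℝ) : ℝ :=
  sSup ((fun μ => Real.sqrt (varHigh SE X₀ μ)) '' Set.Icc (muLow SE X₀) (muHigh SE X₀))

/-- The function `α_ϰ(x|h)` of (3.1)–(3.2), written in terms of `h'`. -/
def alphaF (SE : SublinearExp Ω) (X₀ : Ω → ℝ) (ϰ : ℝ) (h' : ℝ → ℝ) (x : ℝ) : ℝ :=
  if |h' x| ≤ ϰ then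
    (muHigh SE X₀ + muLow SE X₀) / 2 + (muHigh SE X₀ - muLow SE X₀) / 2 * (h' x / ϰ)
  else if ϰ < h' x then muHigh SE X₀
  else muLow SE X₀

/-- The function `β_{ϰ,κ}(x|h)` of (3.3)–(3.4), written in terms of `h'` and `h''`. -/
def betaF (SE : SublinearExp Ω) (X₀ : Ω → ℝ) (ϰ κ : ℝ) (h' h'' : ℝ → ℝ) (x : ℝ) : ℝ :=
  Real.sqrt (
    if |h'' x| ≤ κ then
      (varHigh SE X₀ (alphaF SE X₀ ϰ h' x) + varLow SE X₀ (alphaF SE X₀ ϰ h' x)) / 2 +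
        (varHigh SE X₀ (alphaF SE X₀ ϰ h' x) - varLow SE X₀ (alphaF SE X₀ ϰ h' x)) / 2 *
          (h'' x / κ)
    else if κ < h'' x then varHigh SE X₀ (alphaF SE X₀ ϰ h' x)
    else varLow SE X₀ (alphaF SE X₀ ϰ h' x))

/-- `ξ(x) = (X₀ - α_ϰ(x|h))/β_{ϰ,κ}(x|h)`. -/
def xiF (SE : SublinearExp Ω) (X₀ : Ω → ℝ) (ϰ κ : ℝ) (h' h'' : ℝ → ℝ) (x : ℝ) (ω : Ω) : ℝ :=
  (X₀ ω - alphaF SE X₀ ϰ h' x) / betaF SE X₀ ϰ κ h' h'' x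

/-!
Split `h(x + ξ/√n) = T + δ(x, ξ/√n | h)` with `T` the second-order Taylor polynomial of `h`
at `x`. As `ξ` is affine in `X₀`, `T ∈ 𝓗`, so sub-additivity bounds `Ê[h(x + ξ/√n)]` by
`h(x) + Ê[ξ h'(x)]/√n + Ê[ξ² h''(x)]/(2n) + Ê[δ]`. Positive homogeneity gives
`Ê[g Y] = max (g Ê[Y]) (g Ě[Y])`, and because `α` and `β²` interpolate linearly between the
lower and upper moments, `max (g b) (g a)` exceeds `g · interpClamp a b k g` by at most
`k (b - a) / 2`: the first-order term is at most `ϰ(μ̄-μ̲)/(2√n σ̲)` and the second-order one at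
most `h''(x)/(2n) + (κ/2n)(σ̄²/σ̲² - 1)`. On the Gaussian side `E[Z] = 0` and `E[Z²] = 1` give
`E[h(x + Z/√n)] - E[δ(x, Z/√n | h)] = h(x) + h''(x)/(2n)`, and the two `h''(x)/(2n)` cancel.
-/

/-- The common shape of `α_ϰ(x|h)` (with `g = h'(x)`, `k = ϰ`) and `β²_{ϰ,κ}(x|h)`
(with `g = h''(x)`, `k = κ`). -/
def interpClamp (a b k g : ℝ) : ℝ :=
  if |g| ≤ k then (b + a) / 2 + (b - a) / 2 * (g / k) else if k < g then b else a

lemma abs_div_le_one_of_abs_le {g k : ℝ} (hg : |g| ≤ k) : |g / k| ≤ 1 := by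
  rw [abs_div]
  exact div_le_one_of_le₀ (hg.trans (le_abs_self k)) (abs_nonneg k)

lemma interpClamp_mem_Icc {a b : ℝ} (hab : a ≤ b) (k g : ℝ) : interpClamp a b k g ∈ Icc a b := by
  unfold interpClamp
  split_ifs with hg
  · obtain ⟨h1, h2⟩ := abs_le.mp (abs_div_le_one_of_abs_le hg)
    constructor <;> nlinarith
  · exact ⟨hab, le_rfl⟩
  · exact ⟨le_rfl, hab⟩

lemma max_mul_le_mul_interpClamp_add {a b k : ℝ} (hab : a ≤ b) (hk : 0 ≤ k) (g : ℝ) :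
    max (g * b) (g * a) ≤ g * interpClamp a b k g + k * (b - a) / 2 := by
  unfold interpClamp
  split_ifs with hg hgk
  · obtain ⟨h1, h2⟩ := abs_le.mp (abs_div_le_one_of_abs_le hg)
    have hgt : g = k * (g / k) := by
      rcases hk.eq_or_lt with rfl | hk
      · simpa using abs_nonpos_iff.mp hg
      · field_simp
    set t := g / k
    rw [hgt]
    have hkba : 0 ≤ k * (b - a) := mul_nonneg hk (sub_nonneg.mpr hab)
    refine max_le ?_ ?_
    · nlinarith [mul_nonneg hkba (sq_nonneg (t - 1 / 2))]
    · nlinarith [mul_nonneg hkba (sq_nonneg (t + 1 / 2))]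
  · rw [max_eq_left (by nlinarith)]
    nlinarith
  · have hg0 : g ≤ 0 := by rcases lt_abs.mp (not_le.mp hg) with h | h <;> linarith
    rw [max_eq_right (by nlinarith)]
    nlinarith

namespace SublinearExp

variable (SE : SublinearExp Ω) {X Y : Ω → ℝ}

lemma neg_mem (hX : X ∈ SE.H) : -X ∈ SE.H := by
  simpa using SE.smul_mem (-1) hX

lemma E_add_const (hX : X ∈ SE.H) (c : ℝ) : SE.E (fun ω => X ω + c) = SE.E X + c := by
  change SE.E (X + fun _ => c) = _
  have hle := SE.subadd hX (SE.const_mem c)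
  have hge := SE.subadd (SE.add_mem hX (SE.const_mem c)) (SE.const_mem (-c))
  simp only [SE.const_eq] at hle hge
  have hX' : (X + fun _ => c) + (fun _ => -c) = X := by ext; simp
  rw [hX'] at hge
  exact le_antisymm hle (by linarith)

lemma E_add_add_const_le (hX : X ∈ SE.H) (hY : Y ∈ SE.H) (c : ℝ) :
    SE.E (fun ω => X ω + Y ω + c) ≤ SE.E X + SE.E Y + c :=
  (SE.E_add_const (SE.add_mem hX hY) c).trans_le (by linarith [SE.subadd hX hY])

lemma neg_E_neg_le_E (hX : X ∈ SE.H) : -SE.E (-X) ≤ SE.E X := by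
  have h := SE.subadd hX (SE.neg_mem hX)
  rw [add_neg_cancel, show (0 : Ω → ℝ) = fun _ => 0 from rfl, SE.const_eq] at h
  linarith

lemma neg_E_neg_nonneg (hX : X ∈ SE.H) (hX0 : ∀ ω, 0 ≤ X ω) : 0 ≤ -SE.E (-X) := by
  have h := SE.mono (SE.neg_mem hX) (SE.const_mem 0) fun ω => by simpa using hX0 ω
  rw [SE.const_eq] at h
  linarith

lemma E_smul_eq_max (hX : X ∈ SE.H) (g : ℝ) : SE.E (g • X) = max (g * SE.E X) (g * -SE.E (-X)) := by
  have hle := SE.neg_E_neg_le_E hX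
  rcases le_total 0 g with hg | hg
  · rw [SE.homog hg hX, max_eq_left (mul_le_mul_of_nonneg_left hle hg)]
  · rw [show g • X = (-g) • -X by simp, SE.homog (neg_nonneg.mpr hg) (SE.neg_mem hX),
      max_eq_right (mul_le_mul_of_nonpos_left hle hg)]
    ring

lemma E_mul_add_const (hX : X ∈ SE.H) (g c : ℝ) :
    SE.E (fun ω => g * X ω + c) = max (g * SE.E X) (g * -SE.E (-X)) + c := by
  rw [← SE.E_smul_eq_max hX]
  exact SE.E_add_const (SE.smul_mem g hX) c

lemma uexpE_le_E (hX : X ∈ SE.H) (hYX : ∀ ω, Y ω ≤ X ω) : SE.uexpE Y ≤ SE.E X :=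
  sInf_le ⟨X, hX, hYX, rfl⟩

lemma uexpE_add_le (hX : X ∈ SE.H) (Y : Ω → ℝ) :
    SE.uexpE (fun ω => X ω + Y ω) ≤ SE.E X + SE.uexpE Y := by
  have hbot : (SE.E X : EReal) ≠ ⊥ ∨ SE.uexpE Y ≠ ⊤ := .inl (EReal.coe_ne_bot _)
  have htop : (SE.E X : EReal) ≠ ⊤ ∨ SE.uexpE Y ≠ ⊥ := .inl (EReal.coe_ne_top _)
  rw [add_comm, ← EReal.sub_le_iff_le_add hbot htop]
  refine le_sInf ?_
  rintro _ ⟨Z, hZ, hYZ, rfl⟩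
  rw [EReal.sub_le_iff_le_add (.inl (EReal.coe_ne_bot _)) (.inl (EReal.coe_ne_top _))]
  calc SE.uexpE (fun ω => X ω + Y ω)
      ≤ SE.E (Z + X) := SE.uexpE_le_E (SE.add_mem hZ hX) fun ω => by simp [hYZ ω, add_comm]
    _ ≤ SE.E Z + SE.E X := mod_cast SE.subadd hZ hX

end SublinearExp

section Gaussian

lemma integral_sq_gaussianReal (m : ℝ) (v : ℝ≥0) :
    ∫ z, z ^ 2 ∂gaussianReal m v = v + m ^ 2 := by
  have h := variance_eq_sub (memLp_id_gaussianReal (μ := m) (v := v) 2)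
  rw [variance_id_gaussianReal] at h
  simp only [id, Pi.pow_apply, integral_id_gaussianReal] at h
  linarith

lemma integral_sub_quadratic {μ : Measure ℝ} [IsProbabilityMeasure μ] {f : ℝ → ℝ}
    (hf : Integrable f μ) (hμ : MemLp id 2 μ) (a b c : ℝ) :
    ∫ z, (f z - (a + b * z + c * z ^ 2)) ∂μ
      = ∫ z, f z ∂μ - (a + b * ∫ z, z ∂μ + c * ∫ z, z ^ 2 ∂μ) := by
  have h1 : Integrable (fun z : ℝ => b * z) μ := (hμ.integrable one_le_two).const_mul b
  have h2 : Integrable (fun z : ℝ => c * z ^ 2) μ := hμ.integrable_sq.const_mul c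
  have h01 : Integrable (fun z : ℝ => a + b * z) μ := (integrable_const a).add h1
  have h012 : Integrable (fun z : ℝ => a + b * z + c * z ^ 2) μ := h01.add h2
  rw [integral_sub hf h012, integral_add h01 h2, integral_add (integrable_const a) h1,
    integral_const_mul, integral_const_mul]
  simp

lemma integral_sub_integral_taylorRemainder_gaussianReal {h : ℝ → ℝ} (hh : Continuous h)
    {M : ℝ} (hM : ∀ y, |h y| ≤ M) (x s a b : ℝ) :
    ∫ z, h (x + z / s) ∂gaussianReal 0 1
        - ∫ z, (h (x + z / s) - h x - z / s * a - (z / s) ^ 2 * b / 2) ∂gaussianReal 0 1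
      = h x + b / (2 * s ^ 2) := by
  have hint : Integrable (fun z => h (x + z / s)) (gaussianReal 0 1) :=
    .of_bound (by fun_prop) M (ae_of_all _ fun z => hM _)
  have hδ : (fun z => h (x + z / s) - h x - z / s * a - (z / s) ^ 2 * b / 2)
      = fun z => h (x + z / s) - (h x + a / s * z + b / (2 * s ^ 2) * z ^ 2) := by
    ext z; ring
  rw [hδ, integral_sub_quadratic hint (memLp_id_gaussianReal 2), integral_id_gaussianReal,
    integral_sq_gaussianReal]
  simp

end Gaussian

section Moments

variable {SE : SublinearExp Ω} {X₀ : Ω → ℝ}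

lemma mem_H_of_eq_quadratic (hX₀ : X₀ ∈ SE.H) (hX₀sq : (fun ω => X₀ ω ^ 2) ∈ SE.H)
    {Y : Ω → ℝ} (a b c : ℝ) (hY : ∀ ω, Y ω = a * X₀ ω ^ 2 + b * X₀ ω + c) : Y ∈ SE.H := by
  rw [show Y = a • (fun ω => X₀ ω ^ 2) + b • X₀ + fun _ => c from funext hY]
  exact SE.add_mem (SE.add_mem (SE.smul_mem a hX₀sq) (SE.smul_mem b hX₀)) (SE.const_mem c)

lemma sq_sub_mem (hX₀ : X₀ ∈ SE.H) (hX₀sq : (fun ω => X₀ ω ^ 2) ∈ SE.H) (μ : ℝ) :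
    (fun ω => (X₀ ω - μ) ^ 2) ∈ SE.H :=
  mem_H_of_eq_quadratic hX₀ hX₀sq 1 (-2 * μ) (μ ^ 2) fun ω => by ring

lemma muLow_le_muHigh (hX₀ : X₀ ∈ SE.H) : muLow SE X₀ ≤ muHigh SE X₀ :=
  SE.neg_E_neg_le_E hX₀

lemma varLow_le_varHigh (hX₀ : X₀ ∈ SE.H) (hX₀sq : (fun ω => X₀ ω ^ 2) ∈ SE.H) (μ : ℝ) :
    varLow SE X₀ μ ≤ varHigh SE X₀ μ :=
  SE.neg_E_neg_le_E (sq_sub_mem hX₀ hX₀sq μ)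

lemma varLow_nonneg (hX₀ : X₀ ∈ SE.H) (hX₀sq : (fun ω => X₀ ω ^ 2) ∈ SE.H) (μ : ℝ) :
    0 ≤ varLow SE X₀ μ :=
  SE.neg_E_neg_nonneg (sq_sub_mem hX₀ hX₀sq μ) fun _ => sq_nonneg _

lemma sigLow_nonneg : 0 ≤ sigLow SE X₀ :=
  Real.sInf_nonneg <| by rintro _ ⟨μ, -, rfl⟩; exact Real.sqrt_nonneg _

lemma sigLow_sq_le_varLow (hX₀ : X₀ ∈ SE.H) (hX₀sq : (fun ω => X₀ ω ^ 2) ∈ SE.H) {μ : ℝ}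
    (hμ : μ ∈ Icc (muLow SE X₀) (muHigh SE X₀)) : sigLow SE X₀ ^ 2 ≤ varLow SE X₀ μ := by
  rw [← Real.le_sqrt sigLow_nonneg (varLow_nonneg hX₀ hX₀sq μ)]
  exact csInf_le ⟨0, by rintro _ ⟨ν, -, rfl⟩; exact Real.sqrt_nonneg _⟩ ⟨μ, hμ, rfl⟩

lemma varHigh_le_sigHigh_sq
    (hσ : BddAbove ((fun μ => √(varHigh SE X₀ μ)) '' Icc (muLow SE X₀) (muHigh SE X₀)))
    {μ : ℝ} (hμ : μ ∈ Icc (muLow SE X₀) (muHigh SE X₀)) : varHigh SE X₀ μ ≤ sigHigh SE X₀ ^ 2 := by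
  have h : √(varHigh SE X₀ μ) ≤ sigHigh SE X₀ := le_csSup hσ ⟨μ, hμ, rfl⟩
  exact (Real.sqrt_le_iff.mp h).2

variable {ϰ κ : ℝ} {h' h'' : ℝ → ℝ} {x : ℝ}

lemma alphaF_mem_Icc (hX₀ : X₀ ∈ SE.H) :
    alphaF SE X₀ ϰ h' x ∈ Icc (muLow SE X₀) (muHigh SE X₀) :=
  interpClamp_mem_Icc (muLow_le_muHigh hX₀) ϰ (h' x)

lemma sigLow_sq_le_interpClamp_var (hX₀ : X₀ ∈ SE.H) (hX₀sq : (fun ω => X₀ ω ^ 2) ∈ SE.H) :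
    sigLow SE X₀ ^ 2 ≤ interpClamp (varLow SE X₀ (alphaF SE X₀ ϰ h' x))
      (varHigh SE X₀ (alphaF SE X₀ ϰ h' x)) κ (h'' x) :=
  (sigLow_sq_le_varLow hX₀ hX₀sq (alphaF_mem_Icc hX₀)).trans
    (interpClamp_mem_Icc (varLow_le_varHigh hX₀ hX₀sq _) κ (h'' x)).1

lemma sigLow_le_betaF (hX₀ : X₀ ∈ SE.H) (hX₀sq : (fun ω => X₀ ω ^ 2) ∈ SE.H) :
    sigLow SE X₀ ≤ betaF SE X₀ ϰ κ h' h'' x :=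
  Real.le_sqrt_of_sq_le (sigLow_sq_le_interpClamp_var hX₀ hX₀sq)

lemma E_xiF_div_mul_le (hX₀ : X₀ ∈ SE.H) (hX₀sq : (fun ω => X₀ ω ^ 2) ∈ SE.H)
    (hσ : 0 < sigLow SE X₀) (hϰ : 0 ≤ ϰ) {s : ℝ} (hs : 0 ≤ s) :
    SE.E (fun ω => xiF SE X₀ ϰ κ h' h'' x ω / s * h' x)
      ≤ ϰ * (muHigh SE X₀ - muLow SE X₀) / (2 * s * sigLow SE X₀) := by
  set α := alphaF SE X₀ ϰ h' x
  set β := betaF SE X₀ ϰ κ h' h'' x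
  have hβ : sigLow SE X₀ ≤ β := sigLow_le_betaF hX₀ hX₀sq
  have hscale : 0 ≤ β⁻¹ * s⁻¹ := by have := hσ.trans_le hβ; positivity
  have hfun : (fun ω => xiF SE X₀ ϰ κ h' h'' x ω / s * h' x)
      = (β * s)⁻¹ • fun ω => h' x * X₀ ω + -(h' x * α) := by
    ext ω; simp only [xiF, Pi.smul_apply, smul_eq_mul]; ring
  have hreg : max (h' x * SE.E X₀) (h' x * -SE.E (-X₀))
      ≤ h' x * α + ϰ * (muHigh SE X₀ - muLow SE X₀) / 2 :=
    max_mul_le_mul_interpClamp_add (muLow_le_muHigh hX₀) hϰ (h' x)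
  have hgap : 0 ≤ ϰ * (muHigh SE X₀ - muLow SE X₀) / 2 := by
    have := muLow_le_muHigh hX₀; positivity
  have hmem : (fun ω => h' x * X₀ ω + -(h' x * α)) ∈ SE.H :=
    mem_H_of_eq_quadratic hX₀ hX₀sq 0 (h' x) (-(h' x * α)) fun ω => by ring
  rw [hfun, SE.homog (mul_inv β s ▸ hscale) hmem,
    SE.E_mul_add_const hX₀, mul_inv]
  calc β⁻¹ * s⁻¹ * (max (h' x * SE.E X₀) (h' x * -SE.E (-X₀)) + -(h' x * α))
      ≤ β⁻¹ * s⁻¹ * (ϰ * (muHigh SE X₀ - muLow SE X₀) / 2) :=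
        mul_le_mul_of_nonneg_left (by linarith) hscale
    _ ≤ (sigLow SE X₀)⁻¹ * s⁻¹ * (ϰ * (muHigh SE X₀ - muLow SE X₀) / 2) := by gcongr
    _ = _ := by ring

lemma E_xiF_div_sq_mul_le (hX₀ : X₀ ∈ SE.H) (hX₀sq : (fun ω => X₀ ω ^ 2) ∈ SE.H)
    (hσ : 0 < sigLow SE X₀)
    (hσhigh : BddAbove ((fun μ => √(varHigh SE X₀ μ)) '' Icc (muLow SE X₀) (muHigh SE X₀)))
    (hκ : 0 ≤ κ) (s : ℝ) :
    SE.E (fun ω => (xiF SE X₀ ϰ κ h' h'' x ω / s) ^ 2 * h'' x / 2)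
      ≤ h'' x / (2 * s ^ 2) + κ / (2 * s ^ 2) * (sigHigh SE X₀ ^ 2 / sigLow SE X₀ ^ 2 - 1) := by
  set α := alphaF SE X₀ ϰ h' x
  set v := varHigh SE X₀ α
  set w := varLow SE X₀ α
  set B := interpClamp w v κ (h'' x)
  have hwv : w ≤ v := varLow_le_varHigh hX₀ hX₀sq α
  have hwB : sigLow SE X₀ ^ 2 ≤ B := sigLow_sq_le_interpClamp_var hX₀ hX₀sq
  have hB : 0 < B := (pow_pos hσ 2).trans_le hwB
  have hfun : (fun ω => (xiF SE X₀ ϰ κ h' h'' x ω / s) ^ 2 * h'' x / 2)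
      = (2 * B * s ^ 2)⁻¹ • h'' x • fun ω => (X₀ ω - α) ^ 2 := by
    ext ω
    simp only [xiF, Pi.smul_apply, smul_eq_mul, div_pow]
    rw [show betaF SE X₀ ϰ κ h' h'' x ^ 2 = B from Real.sq_sqrt hB.le]
    ring
  have hreg : max (h'' x * v) (h'' x * w) ≤ h'' x * B + κ * (v - w) / 2 :=
    max_mul_le_mul_interpClamp_add hwv hκ (h'' x)
  have hspread : κ * (v - w) / 2 ≤ B * (κ * (sigHigh SE X₀ ^ 2 / sigLow SE X₀ ^ 2 - 1)) := by
    have hw := sigLow_sq_le_varLow hX₀ hX₀sq (alphaF_mem_Icc (h' := h') (ϰ := ϰ) (x := x) hX₀)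
    have hv := varHigh_le_sigHigh_sq hσhigh (alphaF_mem_Icc (h' := h') (ϰ := ϰ) (x := x) hX₀)
    have hratio : 1 ≤ B / sigLow SE X₀ ^ 2 := (one_le_div (pow_pos hσ 2)).mpr hwB
    have : v - w ≤ B / sigLow SE X₀ ^ 2 * (sigHigh SE X₀ ^ 2 - sigLow SE X₀ ^ 2) := by
      nlinarith
    rw [show B * (κ * (sigHigh SE X₀ ^ 2 / sigLow SE X₀ ^ 2 - 1))
      = κ * (B / sigLow SE X₀ ^ 2 * (sigHigh SE X₀ ^ 2 - sigLow SE X₀ ^ 2)) by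
        field_simp]
    nlinarith
  rw [hfun, SE.homog (by positivity) (SE.smul_mem _ (sq_sub_mem hX₀ hX₀sq α)),
    SE.E_smul_eq_max (sq_sub_mem hX₀ hX₀sq α)]
  calc (2 * B * s ^ 2)⁻¹ * max (h'' x * v) (h'' x * w)
      ≤ (2 * B * s ^ 2)⁻¹ * (B * (h'' x + κ * (sigHigh SE X₀ ^ 2 / sigLow SE X₀ ^ 2 - 1))) := by
        gcongr; linarith
    _ = B⁻¹ * B * (h'' x / (2 * s ^ 2)
          + κ / (2 * s ^ 2) * (sigHigh SE X₀ ^ 2 / sigLow SE X₀ ^ 2 - 1)) := by ring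
    _ = _ := by rw [inv_mul_cancel₀ hB.ne', one_mul]

lemma mem_H_of_eq_quadratic_xiF (hX₀ : X₀ ∈ SE.H) (hX₀sq : (fun ω => X₀ ω ^ 2) ∈ SE.H)
    {Y : Ω → ℝ} (a b c : ℝ)
    (hY : ∀ ω, Y ω = a + b * xiF SE X₀ ϰ κ h' h'' x ω + c * xiF SE X₀ ϰ κ h' h'' x ω ^ 2) :
    Y ∈ SE.H := by
  set α := alphaF SE X₀ ϰ h' x
  set β := betaF SE X₀ ϰ κ h' h'' x
  exact mem_H_of_eq_quadratic hX₀ hX₀sq (c / β ^ 2) (b / β - 2 * c * α / β ^ 2)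
    (a - b * α / β + c * α ^ 2 / β ^ 2) fun ω => by rw [hY]; simp only [xiF]; ring

end Moments

theorem lindeberg_step_sublinear_scaled {SE : SublinearExp Ω} {X₀ : Ω → ℝ}
    (hX₀ : X₀ ∈ SE.H) (hX₀sq : (fun ω => X₀ ω ^ 2) ∈ SE.H) (hσlow : 0 < sigLow SE X₀)
    (hσhigh : BddAbove ((fun μ => √(varHigh SE X₀ μ)) '' Icc (muLow SE X₀) (muHigh SE X₀)))
    {h : ℝ → ℝ} (hh : Continuous h) {M : ℝ} (hM : ∀ y, |h y| ≤ M) (h' h'' : ℝ → ℝ)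
    {ϰ κ : ℝ} (hϰ : 0 ≤ ϰ) (hκ : 0 ≤ κ) {s : ℝ} (hs : 0 ≤ s) (x : ℝ) :
    SE.uexpE (fun ω => h (x + xiF SE X₀ ϰ κ h' h'' x ω / s))
      ≤ (((∫ z, h (x + z / s) ∂gaussianReal 0 1) +
            ϰ * (muHigh SE X₀ - muLow SE X₀) / (2 * s * sigLow SE X₀) +
            κ / (2 * s ^ 2) * (sigHigh SE X₀ ^ 2 / sigLow SE X₀ ^ 2 - 1) -
            ∫ z, (h (x + z / s) - h x - z / s * h' x - (z / s) ^ 2 * h'' x / 2)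
              ∂gaussianReal 0 1 : ℝ) : EReal) +
          SE.uexpE (fun ω => h (x + xiF SE X₀ ϰ κ h' h'' x ω / s) - h x -
            xiF SE X₀ ϰ κ h' h'' x ω / s * h' x -
            (xiF SE X₀ ϰ κ h' h'' x ω / s) ^ 2 * h'' x / 2) := by
  set ξ := xiF SE X₀ ϰ κ h' h'' x
  have hL : (fun ω => ξ ω / s * h' x) ∈ SE.H :=
    mem_H_of_eq_quadratic_xiF hX₀ hX₀sq 0 (h' x / s) 0 fun ω => by ring
  have hQ : (fun ω => (ξ ω / s) ^ 2 * h'' x / 2) ∈ SE.H :=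
    mem_H_of_eq_quadratic_xiF hX₀ hX₀sq 0 0 (h'' x / (2 * s ^ 2)) fun ω => by ring
  have hEL : SE.E (fun ω => ξ ω / s * h' x)
      ≤ ϰ * (muHigh SE X₀ - muLow SE X₀) / (2 * s * sigLow SE X₀) :=
    E_xiF_div_mul_le hX₀ hX₀sq hσlow hϰ hs
  have hEQ : SE.E (fun ω => (ξ ω / s) ^ 2 * h'' x / 2)
      ≤ h'' x / (2 * s ^ 2) + κ / (2 * s ^ 2) * (sigHigh SE X₀ ^ 2 / sigLow SE X₀ ^ 2 - 1) :=
    E_xiF_div_sq_mul_le hX₀ hX₀sq hσlow hσhigh hκ s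
  calc SE.uexpE (fun ω => h (x + ξ ω / s))
      = SE.uexpE (fun ω => (ξ ω / s * h' x + (ξ ω / s) ^ 2 * h'' x / 2 + h x) +
          (h (x + ξ ω / s) - h x - ξ ω / s * h' x - (ξ ω / s) ^ 2 * h'' x / 2)) := by
        congr 1; ext ω; ring
    _ ≤ SE.E (fun ω => ξ ω / s * h' x + (ξ ω / s) ^ 2 * h'' x / 2 + h x) +
          SE.uexpE (fun ω => h (x + ξ ω / s) - h x - ξ ω / s * h' x - (ξ ω / s) ^ 2 * h'' x / 2) :=
        SE.uexpE_add_le (SE.add_mem (SE.add_mem hL hQ) (SE.const_mem _)) _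
    _ ≤ _ := by
      gcongr
      linarith [SE.E_add_add_const_le hL hQ (h x),
        integral_sub_integral_taylorRemainder_gaussianReal hh hM x s (h' x) (h'' x)]

theorem lindeberg_step_sublinear_general
    {Ω : Type} (SE : SublinearExp Ω) (X₀ : Ω → ℝ)
    (hX₀ : X₀ ∈ SE.H) (hX₀sq : (fun ω => (X₀ ω) ^ 2) ∈ SE.H)
    (hσlow : 0 < sigLow SE X₀)
    (hσhigh : BddAbove
      ((fun μ => Real.sqrt (varHigh SE X₀ μ)) '' Set.Icc (muLow SE X₀) (muHigh SE X₀)))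
    (h h' h'' : ℝ → ℝ)
    (hd1 : ∀ x, HasDerivAt h (h' x) x)
    (hbound : ∃ M, ∀ x, |h x| ≤ M ∧ |h' x| ≤ M ∧ |h'' x| ≤ M)
    (ϰ κ : ℝ) (hϰ : 0 < ϰ) (hκ : 0 < κ) (n : ℕ) (x : ℝ) :
    SE.uexpE (fun ω => h (x + xiF SE X₀ ϰ κ h' h'' x ω / Real.sqrt n))
      ≤ (((∫ z, h (x + z / Real.sqrt n) ∂gaussianReal 0 1) +
            ϰ * (muHigh SE X₀ - muLow SE X₀) / (2 * Real.sqrt n * sigLow SE X₀) +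
            κ / (2 * n) * (sigHigh SE X₀ ^ 2 / sigLow SE X₀ ^ 2 - 1) -
            ∫ z, (h (x + z / Real.sqrt n) - h x - (z / Real.sqrt n) * h' x -
              (z / Real.sqrt n) ^ 2 * h'' x / 2) ∂gaussianReal 0 1 : ℝ) : EReal) +
          SE.uexpE (fun ω =>
            h (x + xiF SE X₀ ϰ κ h' h'' x ω / Real.sqrt n) - h x -
              (xiF SE X₀ ϰ κ h' h'' x ω / Real.sqrt n) * h' x -
              (xiF SE X₀ ϰ κ h' h'' x ω / Real.sqrt n) ^ 2 * h'' x / 2) := by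
  obtain ⟨M, hM⟩ := hbound
  have hh : Continuous h := Differentiable.continuous fun y => (hd1 y).differentiableAt
  have := lindeberg_step_sublinear_scaled hX₀ hX₀sq hσlow hσhigh hh (fun y => (hM y).1) h' h''
    hϰ.le hκ.le (Real.sqrt_nonneg n) x
  rwa [Real.sq_sqrt n.cast_nonneg] at this

/-- **Lemma 3.1** (Lindeberg step under sublinear expectation): with the Taylor remainder
`δ(x,y|h) = h(x+y) - h(x) - y h'(x) - y² h''(x)/2`, one has
`Ê[h(x + ξ(x)/√n)] ≤ E[h(x + Z/√n)] + ϰ(μ̄-μ̲)/(2√n σ̲) + (κ/2n)(σ̄²/σ̲² - 1)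
  + Ê[δ(x, ξ(x)/√n | h)] - E[δ(x, Z/√n | h)]`. -/
theorem lindeberg_step_sublinear
    {Ω : Type} (SE : SublinearExp Ω) (X₀ : Ω → ℝ)
    (hX₀ : X₀ ∈ SE.H) (hX₀sq : (fun ω => (X₀ ω) ^ 2) ∈ SE.H)
    (hσlow : 0 < sigLow SE X₀)
    (hσhigh : BddAbove
      ((fun μ => Real.sqrt (varHigh SE X₀ μ)) '' Set.Icc (muLow SE X₀) (muHigh SE X₀)))
    (h h' h'' : ℝ → ℝ)
    (hd1 : ∀ x, HasDerivAt h (h' x) x) (hd2 : ∀ x, HasDerivAt h' (h'' x) x)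
    (hcont : Continuous h'')
    (hbound : ∃ M, ∀ x, |h x| ≤ M ∧ |h' x| ≤ M ∧ |h'' x| ≤ M)
    (ϰ κ : ℝ) (hϰ : 0 < ϰ) (hκ : 0 < κ) (n : ℕ) (hn : 1 ≤ n) (x : ℝ) :
    SE.uexpE (fun ω => h (x + xiF SE X₀ ϰ κ h' h'' x ω / Real.sqrt n))
      ≤ (((∫ z, h (x + z / Real.sqrt n) ∂gaussianReal 0 1) +
            ϰ * (muHigh SE X₀ - muLow SE X₀) / (2 * Real.sqrt n * sigLow SE X₀) +
            κ / (2 * n) * (sigHigh SE X₀ ^ 2 / sigLow SE X₀ ^ 2 - 1) -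
            ∫ z, (h (x + z / Real.sqrt n) - h x - (z / Real.sqrt n) * h' x -
              (z / Real.sqrt n) ^ 2 * h'' x / 2) ∂gaussianReal 0 1 : ℝ) : EReal) +
          SE.uexpE (fun ω =>
            h (x + xiF SE X₀ ϰ κ h' h'' x ω / Real.sqrt n) - h x -
              (xiF SE X₀ ϰ κ h' h'' x ω / Real.sqrt n) * h' x -
              (xiF SE X₀ ϰ κ h' h'' x ω / Real.sqrt n) ^ 2 * h'' x / 2) :=
  lindeberg_step_sublinear_general SE X₀ hX₀ hX₀sq hσlow hσhigh h h' h'' hd1 hbound ϰ κ hϰ hκ n x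
end
end

section
/- First-order bound in the Lindeberg step (inequality (3.14)). Let h : ℝ → ℝ be twice continuously differentiable and let ϰ > 0, κ > 0. Then for every x ∈ ℝ, Ê[h'(x)·ξ(x)] ≤ ϰ(μ̄−μ̲)/(2σ̲). -/
open MeasureTheory ProbabilityTheory Set
open scoped ENNReal NNReal

noncomputable section

variable {Ω : Type}

lemma SE_neg_le {Ω : Type} (SE : SublinearExp Ω) {X : Ω → ℝ} (hX : X ∈ SE.H) :
    -(SE.E (fun ω => -(X ω))) ≤ SE.E X := by
  have hmem : (fun ω => -(X ω)) ∈ SE.H := by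
    have e : (fun ω => -(X ω)) = (-1 : ℝ) • X := by funext ω; simp
    rw [e]; exact SE.smul_mem _ hX
  have h0 := SE.subadd hX hmem
  have e : (X + fun ω => -(X ω)) = (fun _ => (0 : ℝ)) := by funext ω; simp
  rw [e, SE.const_eq] at h0
  linarith

lemma SE_add_const {Ω : Type} (SE : SublinearExp Ω) {X : Ω → ℝ} (hX : X ∈ SE.H) (a : ℝ) :
    SE.E (fun ω => X ω + a) = SE.E X + a := by
  have hmem : (fun ω => X ω + a) ∈ SE.H := by
    have e : (fun ω => X ω + a) = X + (fun _ => a) := rfl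
    rw [e]; exact SE.add_mem hX (SE.const_mem a)
  have h1 := SE.subadd hX (SE.const_mem a)
  rw [SE.const_eq] at h1
  have h2 := SE.subadd hmem (SE.const_mem (-a))
  rw [SE.const_eq] at h2
  have e2 : ((fun ω => X ω + a) + fun _ => -a) = X := by funext ω; simp
  rw [e2] at h2
  have e3 : (X + fun _ => a) = (fun ω => X ω + a) := rfl
  rw [e3] at h1
  linarith

lemma SE_affine {Ω : Type} (SE : SublinearExp Ω) {X : Ω → ℝ} (hX : X ∈ SE.H)
    {c : ℝ} (hc : 0 ≤ c) (a : ℝ) :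
    SE.E (fun ω => c * (X ω + a)) = c * (SE.E X + a) := by
  have hmem : (fun ω => X ω + a) ∈ SE.H := by
    have e : (fun ω => X ω + a) = X + (fun _ => a) := rfl
    rw [e]; exact SE.add_mem hX (SE.const_mem a)
  have e : (fun ω => c * (X ω + a)) = c • (fun ω => X ω + a) := by
    funext ω; simp [smul_eq_mul]
  rw [e, SE.homog hc hmem, SE_add_const SE hX a]

lemma alpha_mem_Icc {Ω : Type} (SE : SublinearExp Ω) (X₀ : Ω → ℝ) (ϰ : ℝ) (h' : ℝ → ℝ)
    (x : ℝ) (hϰ : 0 < ϰ) (hle : muLow SE X₀ ≤ muHigh SE X₀) :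
    alphaF SE X₀ ϰ h' x ∈ Set.Icc (muLow SE X₀) (muHigh SE X₀) := by
  unfold alphaF
  split_ifs with h1 h2
  · have ht1 : h' x / ϰ ≤ 1 := (div_le_one hϰ).2 (le_of_abs_le h1)
    have ht2 : -1 ≤ h' x / ϰ := by
      have : -(h' x) ≤ ϰ := by
        have := neg_abs_le (h' x); linarith
      rw [neg_le, ← neg_div]
      exact (div_le_one hϰ).2 this
    constructor <;> nlinarith
  · exact ⟨hle, le_refl _⟩
  · exact ⟨le_refl _, hle⟩

lemma arith_pos {μl μh ϰ t : ℝ} (hle : μl ≤ μh) (hϰ : 0 < ϰ) :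
    t * (μh - ((μh + μl) / 2 + (μh - μl) / 2 * (t / ϰ))) ≤ ϰ * (μh - μl) / 2 := by
  have key : ∀ u : ℝ, u * ϰ * ((μh - μl) / 2 * (1 - u)) ≤ ϰ * (μh - μl) / 2 := by
    intro u
    nlinarith [mul_nonneg (mul_nonneg hϰ.le (sub_nonneg.2 hle)) (sq_nonneg (u - 1/2)),
      mul_nonneg hϰ.le (sub_nonneg.2 hle)]
  have e : t * (μh - ((μh + μl) / 2 + (μh - μl) / 2 * (t / ϰ)))
      = (t / ϰ) * ϰ * ((μh - μl) / 2 * (1 - t / ϰ)) := by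
    field_simp
    ring
  rw [e]
  exact key _

lemma arith_neg {μl μh ϰ t : ℝ} (hle : μl ≤ μh) (hϰ : 0 < ϰ) :
    -t * (((μh + μl) / 2 + (μh - μl) / 2 * (t / ϰ)) - μl) ≤ ϰ * (μh - μl) / 2 := by
  have key : ∀ u : ℝ, -(u * ϰ) * ((μh - μl) / 2 * (1 + u)) ≤ ϰ * (μh - μl) / 2 := by
    intro u
    nlinarith [mul_nonneg (mul_nonneg hϰ.le (sub_nonneg.2 hle)) (sq_nonneg (u + 1/2)),
      mul_nonneg hϰ.le (sub_nonneg.2 hle)]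
  have e : -t * (((μh + μl) / 2 + (μh - μl) / 2 * (t / ϰ)) - μl)
      = -((t / ϰ) * ϰ) * ((μh - μl) / 2 * (1 + t / ϰ)) := by
    field_simp
    ring
  rw [e]
  exact key _

/-- **Inequality (3.14)**: first-order bound in the Lindeberg step,
`Ê[h'(x) ξ(x)] ≤ ϰ(μ̄ - μ̲)/(2σ̲)`. -/
theorem lindeberg_first_order_bound
    {Ω : Type} (SE : SublinearExp Ω) (X₀ : Ω → ℝ)
    (hX₀ : X₀ ∈ SE.H) (hX₀sq : (fun ω => (X₀ ω) ^ 2) ∈ SE.H)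
    (hσlow : 0 < sigLow SE X₀)
    (hσhigh : BddAbove
      ((fun μ => Real.sqrt (varHigh SE X₀ μ)) '' Set.Icc (muLow SE X₀) (muHigh SE X₀)))
    (h h' h'' : ℝ → ℝ)
    (hd1 : ∀ x, HasDerivAt h (h' x) x) (hd2 : ∀ x, HasDerivAt h' (h'' x) x)
    (hcont : Continuous h'')
    (ϰ κ : ℝ) (hϰ : 0 < ϰ) (hκ : 0 < κ) (x : ℝ) :
    SE.uexpE (fun ω => h' x * xiF SE X₀ ϰ κ h' h'' x ω)
      ≤ ((ϰ * (muHigh SE X₀ - muLow SE X₀) / (2 * sigLow SE X₀) : ℝ) : EReal) := by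
  classical
  have hmle : muLow SE X₀ ≤ muHigh SE X₀ := SE_neg_le SE hX₀
  set μl := muLow SE X₀ with hμl
  set μh := muHigh SE X₀ with hμh
  set σ := sigLow SE X₀ with hσdef
  set α := alphaF SE X₀ ϰ h' x with hαdef
  set β := betaF SE X₀ ϰ κ h' h'' x with hβdef
  have hαmem : α ∈ Set.Icc μl μh := alpha_mem_Icc SE X₀ ϰ h' x hϰ hmle
  -- the squared function is in H
  have hsqmem : (fun ω => (X₀ ω - α) ^ 2) ∈ SE.H := by
    have e : (fun ω => (X₀ ω - α) ^ 2)
        = (fun ω => (X₀ ω) ^ 2) + ((-2 * α) • X₀ + fun _ => α ^ 2) := by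
      funext ω
      simp only [Pi.add_apply, Pi.smul_apply, smul_eq_mul]
      ring
    rw [e]
    exact SE.add_mem hX₀sq (SE.add_mem (SE.smul_mem _ hX₀) (SE.const_mem _))
  have hvle : varLow SE X₀ α ≤ varHigh SE X₀ α := SE_neg_le SE hsqmem
  -- σ ≤ β
  have hstep : σ ≤ Real.sqrt (varLow SE X₀ α) := by
    rw [hσdef]
    apply csInf_le
    · refine ⟨0, fun y hy => ?_⟩
      obtain ⟨μ, _, rfl⟩ := hy
      exact Real.sqrt_nonneg _
    · exact ⟨α, hαmem, rfl⟩
  have hβge : Real.sqrt (varLow SE X₀ α) ≤ β := by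
    rw [hβdef]
    unfold betaF
    rw [← hαdef]
    apply Real.sqrt_le_sqrt
    split_ifs with h1 h2
    · have ht1 : h'' x / κ ≤ 1 := (div_le_one hκ).2 (le_of_abs_le h1)
      have ht2 : -1 ≤ h'' x / κ := by
        have : -(h'' x) ≤ κ := by
          have := neg_abs_le (h'' x); linarith
        rw [neg_le, ← neg_div]
        exact (div_le_one hκ).2 this
      nlinarith
    · linarith
    · exact le_refl _
  have hσβ : σ ≤ β := le_trans hstep hβge
  have hβpos : 0 < β := lt_of_lt_of_le hσlow hσβ
  -- the function rewritten
  set c := h' x / β with hcdef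
  have hfeq : (fun ω => h' x * xiF SE X₀ ϰ κ h' h'' x ω)
      = (fun ω => c * (X₀ ω - α)) := by
    funext ω
    unfold xiF
    rw [← hαdef, ← hβdef, hcdef]
    ring
  have hnegmem : (fun ω => -(X₀ ω)) ∈ SE.H := by
    have e : (fun ω => -(X₀ ω)) = (-1 : ℝ) • X₀ := by funext ω; simp
    rw [e]; exact SE.smul_mem _ hX₀
  have hEneg : SE.E (fun ω => -(X₀ ω)) = -μl := by
    rw [hμl]; unfold muLow; ring_nf
  -- RHS is nonnegative
  have hN : (0 : ℝ) ≤ ϰ * (μh - μl) / 2 := by nlinarith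
  have hRHS0 : (0 : ℝ) ≤ ϰ * (μh - μl) / (2 * σ) :=
    div_nonneg (by nlinarith) (by positivity)
  have hRHSeq : ϰ * (μh - μl) / (2 * σ) = (ϰ * (μh - μl) / 2) / σ := by ring
  -- bound on SE.E of the function
  have hEbound : SE.E (fun ω => c * (X₀ ω - α)) ≤ ϰ * (μh - μl) / (2 * σ) := by
    rcases le_or_gt 0 (h' x) with hpos | hneg
    · -- c ≥ 0
      have hc0 : 0 ≤ c := div_nonneg hpos hβpos.le
      have e : (fun ω => c * (X₀ ω - α)) = (fun ω => c * (X₀ ω + (-α))) := by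
        funext ω; ring
      rw [e, SE_affine SE hX₀ hc0 (-α)]
      have hEX : SE.E X₀ = μh := rfl
      rw [hEX]
      -- value is c * (μh - α)
      have hval : c * (μh + -α) = (h' x * (μh - α)) / β := by
        rw [hcdef]; ring
      rw [hval]
      have hnum0 : 0 ≤ h' x * (μh - α) := mul_nonneg hpos (by linarith [hαmem.2])
      have hnumle : h' x * (μh - α) ≤ ϰ * (μh - μl) / 2 := by
        rw [hαdef]
        unfold alphaF
        split_ifs with h1 h2
        · rw [← hμl, ← hμh]
          exact arith_pos hmle hϰ
        · rw [← hμh]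
          have e0 : μh - μh = 0 := by ring
          rw [e0, mul_zero]
          exact hN
        · exfalso
          rw [abs_of_nonneg hpos] at h1
          exact h1 (le_of_not_gt h2)
      rw [hRHSeq]
      exact div_le_div₀ hN hnumle hσlow hσβ
    · -- c < 0
      have hc0 : 0 ≤ -c := by
        rw [hcdef]
        have : h' x / β ≤ 0 := div_nonpos_of_nonpos_of_nonneg hneg.le hβpos.le
        linarith
      have e : (fun ω => c * (X₀ ω - α)) = (fun ω => (-c) * ((fun ω => -(X₀ ω)) ω + α)) := by
        funext ω; simp only []; ring
      rw [e, SE_affine SE hnegmem hc0 α, hEneg]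
      have hval : -c * (-μl + α) = ((-(h' x)) * (α - μl)) / β := by
        rw [hcdef]; ring
      rw [hval]
      have hnum0 : 0 ≤ (-(h' x)) * (α - μl) :=
        mul_nonneg (by linarith) (by linarith [hαmem.1])
      have hnumle : (-(h' x)) * (α - μl) ≤ ϰ * (μh - μl) / 2 := by
        rw [hαdef]
        unfold alphaF
        split_ifs with h1 h2
        · rw [← hμl, ← hμh]
          exact arith_neg hmle hϰ
        · exact absurd h2 (not_lt.2 (by linarith))
        · rw [← hμl]
          have e0 : μl - μl = 0 := by ring
          rw [e0, mul_zero]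
          exact hN
      rw [hRHSeq]
      exact div_le_div₀ hN hnumle hσlow hσβ
  -- membership of the full function
  have hmemf : (fun ω => h' x * xiF SE X₀ ϰ κ h' h'' x ω) ∈ SE.H := by
    rw [hfeq]
    have e : (fun ω => c * (X₀ ω - α)) = c • (X₀ + fun _ => -α) := by
      funext ω
      simp only [Pi.smul_apply, Pi.add_apply, smul_eq_mul]
      ring
    rw [e]
    exact SE.smul_mem _ (SE.add_mem hX₀ (SE.const_mem _))
  have h1 : SE.uexpE (fun ω => h' x * xiF SE X₀ ϰ κ h' h'' x ω)
      ≤ ((SE.E (fun ω => h' x * xiF SE X₀ ϰ κ h' h'' x ω) : ℝ) : EReal) :=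
    sInf_le ⟨_, hmemf, fun ω => le_refl _, rfl⟩
  refine le_trans h1 ?_
  rw [EReal.coe_le_coe_iff, hfeq]
  exact hEbound

end
end

section
/- Lemma 3.4 (Gaussian smoothing). Let (Ω', 𝓕, P) be a probability space, S a measurable space, η : Ω' → S a random element, and Z a standard normal random variable independent of η. Let A ⊆ ℝ × S be measurable, with sections A(s) := {z ∈ ℝ : (z,s) ∈ A}, and let b ≠ 0. Then the function h(x) := P(x + bZ ∈ A(η)) is twice continuously differentiable on ℝ, and for all x, y ∈ ℝ: |h(x+y) − h(x) − y·h'(x) − y²·h''(x)/2| ≤ 0.4·|y/b|³. -/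
/-!
Rescaling reduces everything to `b = 1`: `h x = H (x / b)` with `H s = P((s + Z, η) ∈ B)` for
`B = {(z, s) | (b z, s) ∈ A}`. By independence `H s = ∫ w u φ(u - s) du`, where
`w u = P((u, η) ∈ B) ∈ [0, 1]` and `φ` is the standard normal density. Since
`(Heₙ φ)' = -Heₙ₊₁ φ` for the probabilists' Hermite polynomials, differentiating under the
integral sign gives `H⁽ⁿ⁾ s = ∫ w u Heₙ(u - s) φ(u - s) du`; hence
`|H'''| ≤ ∫ |He₃ φ| = (8 e^{-3/2} + 2) / √(2π) < 2.4`, and Taylor's formula with this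
bound on the third derivative gives the remainder bound `2.4 |y / b|³ / 3! = 0.4 |y / b|³`.
-/

open MeasureTheory ProbabilityTheory Set
open scoped ENNReal NNReal

noncomputable section

open Polynomial Real

lemma hasDerivAt_gaussianPDFReal (μ : ℝ) (v : ℝ≥0) (t : ℝ) :
    HasDerivAt (gaussianPDFReal μ v) (-((t - μ) / v) * gaussianPDFReal μ v t) t := by
  refine (((((hasDerivAt_id t).sub_const μ).pow 2).neg.div_const (2 * (v : ℝ))).exp.const_mul
    (√(2 * π * v))⁻¹).congr_deriv ?_
  simp only [gaussianPDFReal, id, Pi.neg_apply, Pi.pow_apply]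
  ring

/-- `hermiteKernel n = (-1)ⁿ φ⁽ⁿ⁾` for the standard normal density `φ`. -/
def hermiteKernel (n : ℕ) (t : ℝ) : ℝ := aeval t (hermite n) * gaussianPDFReal 0 1 t

lemma hasDerivAt_hermiteKernel (n : ℕ) (t : ℝ) :
    HasDerivAt (hermiteKernel n) (-hermiteKernel (n + 1) t) t := by
  refine (((hermite n).hasDerivAt_aeval t).mul (hasDerivAt_gaussianPDFReal 0 1 t)).congr_deriv ?_
  simp only [hermiteKernel, hermite_succ, map_sub, map_mul, aeval_X, NNReal.coe_one]
  ring

lemma abs_pow_le_mul_exp (k : ℕ) (t : ℝ) :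
    |t| ^ k ≤ (1 + 4 ^ k * k.factorial) * rexp (t ^ 2 / 4) := by
  have hexp : 1 ≤ rexp (t ^ 2 / 4) := one_le_exp (by positivity)
  have hfact : (t ^ 2) ^ k ≤ 4 ^ k * k.factorial * rexp (t ^ 2 / 4) := by
    have := pow_div_factorial_le_exp (x := t ^ 2 / 4) (by positivity) k
    rw [div_pow, div_div, div_le_iff₀ (by positivity)] at this
    linarith
  have hpow : |t| ^ k ≤ 1 + (t ^ 2) ^ k := by
    rcases le_total |t| 1 with h | h
    · linarith [pow_le_one₀ (n := k) (abs_nonneg t) h, pow_nonneg (sq_nonneg t) k]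
    · rw [← sq_abs, ← pow_mul]
      linarith [pow_le_pow_right₀ h (by omega : k ≤ 2 * k)]
  nlinarith

lemma exists_abs_eval_le_mul_exp (p : ℝ[X]) :
    ∃ C, ∀ t, |p.eval t| ≤ C * rexp (t ^ 2 / 4) := by
  refine ⟨∑ i ∈ Finset.range (p.natDegree + 1), |p.coeff i| * (1 + 4 ^ i * i.factorial),
    fun t => ?_⟩
  rw [eval_eq_sum_range, Finset.sum_mul]
  refine (Finset.abs_sum_le_sum_abs _ _).trans (Finset.sum_le_sum fun i _ => ?_)
  rw [abs_mul, abs_pow, mul_assoc]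
  exact mul_le_mul_of_nonneg_left (abs_pow_le_mul_exp i t) (abs_nonneg _)

lemma exists_abs_hermiteKernel_le (n : ℕ) :
    ∃ C, ∀ t, |hermiteKernel n t| ≤ C * rexp (-(1 / 4) * t ^ 2) := by
  obtain ⟨C, hC⟩ := exists_abs_eval_le_mul_exp ((hermite n).map (algebraMap ℤ ℝ))
  refine ⟨(√(2 * π))⁻¹ * C, fun t => ?_⟩
  have hpdf : gaussianPDFReal 0 1 t * rexp (t ^ 2 / 4) =
      (√(2 * π))⁻¹ * rexp (-(1 / 4) * t ^ 2) := by
    rw [gaussianPDFReal, mul_assoc, ← exp_add]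
    push_cast
    ring_nf
  have hC' := hC t
  rw [eval_map_algebraMap] at hC'
  rw [hermiteKernel, abs_mul, abs_of_nonneg (gaussianPDFReal_nonneg _ _ _)]
  calc |aeval t (hermite n)| * gaussianPDFReal 0 1 t
      ≤ C * rexp (t ^ 2 / 4) * gaussianPDFReal 0 1 t := by
        gcongr; exact gaussianPDFReal_nonneg _ _ _
    _ = (√(2 * π))⁻¹ * C * rexp (-(1 / 4) * t ^ 2) := by
        rw [mul_right_comm, mul_assoc, hpdf]; ring

lemma continuous_hermiteKernel (n : ℕ) : Continuous (hermiteKernel n) :=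
  continuous_iff_continuousAt.2 fun t => (hasDerivAt_hermiteKernel n t).continuousAt

lemma integrable_hermiteKernel (n : ℕ) : Integrable (hermiteKernel n) := by
  obtain ⟨C, hC⟩ := exists_abs_hermiteKernel_le n
  exact ((integrable_exp_neg_mul_sq (by norm_num : (0 : ℝ) < 1 / 4)).const_mul C).mono'
    (continuous_hermiteKernel n).aestronglyMeasurable (ae_of_all _ hC)

open Filter Topology in
lemma tendsto_hermiteKernel_atTop (n : ℕ) : Tendsto (hermiteKernel n) atTop (𝓝 0) := by
  obtain ⟨C, hC⟩ := exists_abs_hermiteKernel_le n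
  have hexp : Tendsto (fun t : ℝ => rexp (-(1 / 4) * t ^ 2)) atTop (𝓝 0) :=
    tendsto_exp_atBot.comp ((tendsto_pow_atTop two_ne_zero).const_mul_atTop_of_neg (by norm_num))
  exact squeeze_zero_norm hC (by simpa using hexp.const_mul C)

lemma exp_neg_mul_sq_sub_le {c x x₀ : ℝ} (hc : 0 ≤ c) (hx : |x - x₀| ≤ 1) (u : ℝ) :
    rexp (-c * (u - x) ^ 2) ≤ rexp c * rexp (-(c / 2) * (u - x₀) ^ 2) := by
  rw [← exp_add, exp_le_exp]
  have : (u - x₀) ^ 2 ≤ 2 * (u - x) ^ 2 + 2 := by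
    nlinarith [sq_nonneg (u - x - (x - x₀)), sq_abs (x - x₀), abs_nonneg (x - x₀)]
  nlinarith

lemma hasDerivAt_integral_mul_comp_sub {w g g' : ℝ → ℝ} {M C c : ℝ} (hw : Measurable w)
    (hwM : ∀ u, |w u| ≤ M) (hg : Integrable g) (hg' : ∀ t, HasDerivAt g (g' t) t)
    (hg'm : Measurable g') (hc : 0 < c) (hg'C : ∀ t, |g' t| ≤ C * rexp (-c * t ^ 2))
    (x₀ : ℝ) :
    HasDerivAt (fun x => ∫ u, w u * g (u - x)) (∫ u, w u * -g' (u - x₀)) x₀ := by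
  have hM : 0 ≤ M := (abs_nonneg _).trans (hwM 0)
  have hC : 0 ≤ C := by
    have := (abs_nonneg _).trans (hg'C 0)
    exact nonneg_of_mul_nonneg_left this (exp_pos _)
  have hgc : Continuous g := continuous_iff_continuousAt.2 fun t => (hg' t).continuousAt
  have h_bound : ∀ u, ∀ x ∈ Metric.ball x₀ 1, ‖w u * -g' (u - x)‖ ≤
      M * C * rexp c * rexp (-(c / 2) * (u - x₀) ^ 2) := by
    intro u x hx
    rw [Metric.mem_ball, Real.dist_eq] at hx
    rw [norm_mul, norm_neg, Real.norm_eq_abs, Real.norm_eq_abs]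
    calc |w u| * |g' (u - x)| ≤ M * (C * (rexp c * rexp (-(c / 2) * (u - x₀) ^ 2))) := by
          gcongr
          · exact hwM u
          · exact (hg'C _).trans (by gcongr; exact exp_neg_mul_sq_sub_le hc.le hx.le u)
      _ = _ := by ring
  have h_diff : ∀ u, ∀ x ∈ Metric.ball x₀ 1,
      HasDerivAt (fun x => w u * g (u - x)) (w u * -g' (u - x)) x := fun u x _ =>
    (((hg' (u - x)).comp x ((hasDerivAt_id x).const_sub u)).const_mul (w u)).congr_deriv
      (by simp)
  exact (hasDerivAt_integral_of_dominated_loc_of_deriv_le (Metric.ball_mem_nhds x₀ one_pos)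
    (Filter.Eventually.of_forall fun x =>
      (hw.mul (hgc.measurable.comp (measurable_sub_const x))).aestronglyMeasurable)
    ((hg.comp_sub_right x₀).bdd_mul hw.aestronglyMeasurable (ae_of_all _ hwM))
    (hw.mul (hg'm.comp (measurable_sub_const x₀)).neg).aestronglyMeasurable
    (ae_of_all _ h_bound)
    (((integrable_exp_neg_mul_sq (half_pos hc)).comp_sub_right x₀).const_mul _)
    (ae_of_all _ h_diff)).2

def hermiteSmoothing (w : ℝ → ℝ) (n : ℕ) (s : ℝ) : ℝ :=
  ∫ u, w u * hermiteKernel n (u - s)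

lemma hasDerivAt_hermiteSmoothing {w : ℝ → ℝ} {M : ℝ} (hw : Measurable w)
    (hwM : ∀ u, |w u| ≤ M) (n : ℕ) (s : ℝ) :
    HasDerivAt (hermiteSmoothing w n) (hermiteSmoothing w (n + 1) s) s := by
  obtain ⟨C, hC⟩ := exists_abs_hermiteKernel_le (n + 1)
  have := hasDerivAt_integral_mul_comp_sub hw hwM (integrable_hermiteKernel n)
    (hasDerivAt_hermiteKernel n) (continuous_hermiteKernel (n + 1)).measurable.neg
    (by norm_num) (fun t => (abs_neg _).trans_le (hC t)) s
  simp only [neg_neg] at this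
  exact this

lemma differentiable_hermiteSmoothing {w : ℝ → ℝ} {M : ℝ} (hw : Measurable w)
    (hwM : ∀ u, |w u| ≤ M) (n : ℕ) : Differentiable ℝ (hermiteSmoothing w n) :=
  fun s => (hasDerivAt_hermiteSmoothing hw hwM n s).differentiableAt

lemma abs_hermiteSmoothing_le {w : ℝ → ℝ} {M : ℝ} (hwM : ∀ u, |w u| ≤ M) (n : ℕ)
    (s : ℝ) :
    |hermiteSmoothing w n s| ≤ M * ∫ t, |hermiteKernel n t| := by
  rw [hermiteSmoothing, ← Real.norm_eq_abs]
  calc ‖∫ u, w u * hermiteKernel n (u - s)‖ ≤ ∫ u, M * |hermiteKernel n (u - s)| :=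
        norm_integral_le_of_norm_le
          (((integrable_hermiteKernel n).comp_sub_right s).abs.const_mul M)
          (ae_of_all _ fun u => by
            rw [norm_mul, Real.norm_eq_abs, Real.norm_eq_abs]
            gcongr
            exact hwM u)
    _ = M * ∫ t, |hermiteKernel n t| := by
        rw [integral_const_mul, integral_sub_right_eq_self (fun t => |hermiteKernel n t|)]

lemma hermiteKernel_two (t : ℝ) : hermiteKernel 2 t = (t ^ 2 - 1) * gaussianPDFReal 0 1 t := by
  rw [hermiteKernel]
  congr 1
  simp only [hermite_succ, hermite_zero, mul_one, sub_zero, derivative_one, derivative_X,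
    aeval_sub, map_mul, map_one, aeval_X]
  ring

lemma hermiteKernel_three (t : ℝ) :
    hermiteKernel 3 t = t * (t ^ 2 - 3) * gaussianPDFReal 0 1 t := by
  rw [hermiteKernel]
  congr 1
  simp only [hermite_succ, hermite_zero, mul_one, one_mul, sub_zero, derivative_one, derivative_X,
    derivative_sub, derivative_mul, aeval_sub, map_add, map_mul, map_one, aeval_X]
  ring

lemma hermiteKernel_three_neg (t : ℝ) : hermiteKernel 3 (-t) = -hermiteKernel 3 t := by
  simp only [hermiteKernel_three, gaussianPDFReal, sub_zero, neg_sq]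
  ring

lemma hermiteKernel_three_nonpos {t : ℝ} (h0 : 0 ≤ t) (ht : t ≤ √3) :
    hermiteKernel 3 t ≤ 0 := by
  have : t ^ 2 ≤ 3 := by simpa using pow_le_pow_left₀ h0 ht 2
  rw [hermiteKernel_three]
  exact mul_nonpos_of_nonpos_of_nonneg (mul_nonpos_of_nonneg_of_nonpos h0 (by linarith))
    (gaussianPDFReal_nonneg _ _ _)

lemma hermiteKernel_three_nonneg {t : ℝ} (ht : √3 ≤ t) : 0 ≤ hermiteKernel 3 t := by
  have h0 : 0 ≤ t := (sqrt_nonneg 3).trans ht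
  have : 3 ≤ t ^ 2 := by simpa using pow_le_pow_left₀ (sqrt_nonneg 3) ht 2
  rw [hermiteKernel_three]
  exact mul_nonneg (mul_nonneg h0 (by linarith)) (gaussianPDFReal_nonneg _ _ _)

/-- `hermiteKernel 2`, an antiderivative of `-hermiteKernel 3`, increases on `[0, √3]` and then
decreases to its limit `0`. -/
lemma integral_Ioi_abs_hermiteKernel_three :
    ∫ t in Ioi 0, |hermiteKernel 3 t| = 2 * hermiteKernel 2 √3 - hermiteKernel 2 0 := by
  rw [← Ioc_union_Ioi_eq_Ioi (sqrt_nonneg 3), setIntegral_union (Ioc_disjoint_Ioi le_rfl)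
    measurableSet_Ioi (integrable_hermiteKernel 3).abs.integrableOn
    (integrable_hermiteKernel 3).abs.integrableOn]
  have hinner : ∫ t in Ioc 0 √3, |hermiteKernel 3 t| =
      hermiteKernel 2 √3 - hermiteKernel 2 0 := by
    rw [setIntegral_congr_fun measurableSet_Ioc
        fun t ht => abs_of_nonpos (hermiteKernel_three_nonpos ht.1.le ht.2),
      ← intervalIntegral.integral_of_le (sqrt_nonneg 3),
      intervalIntegral.integral_eq_sub_of_hasDerivAt (fun t _ => hasDerivAt_hermiteKernel 2 t)
        ((continuous_hermiteKernel 3).neg.intervalIntegrable _ _)]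
  have houter : ∫ t in Ioi √3, |hermiteKernel 3 t| = hermiteKernel 2 √3 := by
    rw [setIntegral_congr_fun measurableSet_Ioi
        fun t ht => abs_of_nonneg (hermiteKernel_three_nonneg (le_of_lt ht)),
      integral_Ioi_of_hasDerivAt_of_tendsto' (f := fun t => -hermiteKernel 2 t)
        (f' := hermiteKernel 3)
        (fun t _ => (hasDerivAt_hermiteKernel 2 t).neg.congr_deriv (neg_neg _))
        (integrable_hermiteKernel 3).integrableOn
        (by simpa using (tendsto_hermiteKernel_atTop 2).neg)]
    ring
  rw [hinner, houter]
  ring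

lemma integral_abs_hermiteKernel_three :
    ∫ t, |hermiteKernel 3 t| = (8 * rexp (-(3 / 2)) + 2) / √(2 * π) := by
  have heven (t : ℝ) : |hermiteKernel 3 t| = |hermiteKernel 3 (|t|)| := by
    rcases abs_choice t with h | h <;> rw [h]
    rw [hermiteKernel_three_neg, abs_neg]
  rw [integral_congr_ae (ae_of_all _ heven), integral_comp_abs (f := fun t => |hermiteKernel 3 t|),
    integral_Ioi_abs_hermiteKernel_three, hermiteKernel_two, hermiteKernel_two]
  simp only [gaussianPDFReal, NNReal.coe_one, sub_zero, mul_one,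
    sq_sqrt (by norm_num : (0 : ℝ) ≤ 3)]
  norm_num
  ring

lemma integral_abs_hermiteKernel_three_le : ∫ t, |hermiteKernel 3 t| ≤ 2.4 := by
  have hsqrt : 2.5 ≤ √(2 * π) := le_sqrt_of_sq_le (by nlinarith [pi_gt_d2])
  have hexp : rexp (-(3 / 2)) ≤ 2 / 5 := by
    rw [exp_neg, inv_le_comm₀ (exp_pos _) (by norm_num)]
    linarith [add_one_le_exp (3 / 2 : ℝ)]
  rw [integral_abs_hermiteKernel_three, div_le_iff₀ (by positivity)]
  nlinarith

lemma abs_le_of_hasDerivAt_of_abs_le_pow {f g : ℝ → ℝ} {c : ℝ} {n : ℕ} (h0 : f 0 = 0)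
    (hf : ∀ t, HasDerivAt f (g t) t) (hg : ∀ t, |g t| ≤ c * |t| ^ n) (t : ℝ) :
    |f t| ≤ c * |t| ^ (n + 1) / (n + 1) := by
  wlog ht : 0 ≤ t generalizing f g t
  · simpa using this (f := fun s => f (-s)) (g := fun s => -g (-s)) (by simpa)
      (fun s => ((hf (-s)).comp s (hasDerivAt_neg s)).congr_deriv (by ring))
      (fun s => by simpa using hg (-s)) (-t) (by linarith)
  have hB (s : ℝ) : HasDerivAt (fun s => c * s ^ (n + 1) / (n + 1)) (c * s ^ n) s :=
    (((hasDerivAt_pow (n + 1) s).const_mul c).div_const _).congr_deriv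
      (by field_simp; push_cast; ring)
  have := image_norm_le_of_norm_deriv_right_le_deriv_boundary
    (continuous_iff_continuousAt.2 fun s => (hf s).continuousAt).continuousOn
    (fun s _ => (hf s).hasDerivWithinAt) (by simp [h0]) hB
    (fun s hs => by simpa [abs_of_nonneg hs.1] using hg s) (right_mem_Icc.2 ht)
  rwa [abs_of_nonneg ht]

lemma abs_taylor_remainder_two_le {f f₁ f₂ f₃ : ℝ → ℝ} {M : ℝ}
    (hf : ∀ x, HasDerivAt f (f₁ x) x) (hf₁ : ∀ x, HasDerivAt f₁ (f₂ x) x)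
    (hf₂ : ∀ x, HasDerivAt f₂ (f₃ x) x) (hM : ∀ x, |f₃ x| ≤ M) (x y : ℝ) :
    |f (x + y) - f x - y * f₁ x - y ^ 2 * f₂ x / 2| ≤ M * |y| ^ 3 / 6 := by
  have h₂ (t : ℝ) : |f₂ (x + t) - f₂ x| ≤ M * |t| ^ 1 := by
    simpa using abs_le_of_hasDerivAt_of_abs_le_pow (n := 0) (by simp)
      (fun t => ((hf₂ (x + t)).comp_const_add x t).sub_const (f₂ x))
      (fun t => by simpa using hM (x + t)) t
  have h₁ (t : ℝ) : |f₁ (x + t) - f₁ x - t * f₂ x| ≤ M / 2 * |t| ^ 2 := by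
    refine (abs_le_of_hasDerivAt_of_abs_le_pow (n := 1)
      (f := fun t => f₁ (x + t) - f₁ x - t * f₂ x) (g := fun t => f₂ (x + t) - f₂ x)
      (by simp)
      (fun t => ((((hf₁ (x + t)).comp_const_add x t).sub_const (f₁ x)).sub
        ((hasDerivAt_id t).mul_const (f₂ x))).congr_deriv (by simp)) h₂ t).trans_eq ?_
    norm_num
    ring
  refine (abs_le_of_hasDerivAt_of_abs_le_pow (n := 2)
    (f := fun t => f (x + t) - f x - t * f₁ x - t ^ 2 * f₂ x / 2)
    (g := fun t => f₁ (x + t) - f₁ x - t * f₂ x) (by simp)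
    (fun t => (((((hf (x + t)).comp_const_add x t).sub_const (f x)).sub
      ((hasDerivAt_id t).mul_const (f₁ x))).sub
      (((hasDerivAt_pow 2 t).mul_const (f₂ x)).div_const 2)).congr_deriv (by simp; ring))
    h₁ y).trans_eq ?_
  norm_num
  ring

lemma abs_hermiteSmoothing_taylor_le {w : ℝ → ℝ} (hw : Measurable w)
    (hw1 : ∀ u, |w u| ≤ 1) (s r : ℝ) :
    |hermiteSmoothing w 0 (s + r) - hermiteSmoothing w 0 s - r * hermiteSmoothing w 1 s
      - r ^ 2 * hermiteSmoothing w 2 s / 2| ≤ 0.4 * |r| ^ 3 := by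
  have hF := hasDerivAt_hermiteSmoothing hw hw1
  have hF₃ (s : ℝ) : |hermiteSmoothing w 3 s| ≤ 2.4 :=
    (abs_hermiteSmoothing_le hw1 3 s).trans (by simpa using integral_abs_hermiteKernel_three_le)
  calc _ ≤ 2.4 * |r| ^ 3 / 6 := abs_taylor_remainder_two_le (hF 0) (hF 1) (hF 2) hF₃ s r
    _ = 0.4 * |r| ^ 3 := by ring

lemma measureReal_mem_eq_integral {Ω α β : Type*} [MeasurableSpace Ω] [MeasurableSpace α]
    [MeasurableSpace β] {P : Measure Ω} [IsFiniteMeasure P] {X : Ω → α} {Y : Ω → β}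
    (hX : Measurable X) (hY : Measurable Y) (hXY : IndepFun X Y P) {B : Set (α × β)}
    (hB : MeasurableSet B) :
    P.real {ω | (X ω, Y ω) ∈ B} = ∫ x, (P.map Y).real (Prod.mk x ⁻¹' B) ∂(P.map X) := by
  have hlaw := (indepFun_iff_map_prod_eq_prod_map_map hX.aemeasurable hY.aemeasurable).1 hXY
  rw [show P.real {ω | (X ω, Y ω) ∈ B} = (P.map fun ω => (X ω, Y ω)).real B from
    (map_measureReal_apply (hX.prodMk hY) hB).symm, hlaw, measureReal_def, Measure.prod_apply hB]
  exact (integral_toReal (measurable_measure_prodMk_left hB).aemeasurable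
    (ae_of_all _ fun x => measure_lt_top _ _)).symm

lemma measureReal_add_mem_eq_hermiteSmoothing {Ω S : Type*} [MeasurableSpace Ω]
    [MeasurableSpace S] {P : Measure Ω} [IsFiniteMeasure P] {η : Ω → S} {Z : Ω → ℝ}
    (hη : Measurable η) (hZ : Measurable Z) (hgauss : P.map Z = gaussianReal 0 1)
    (hindep : IndepFun Z η P) {B : Set (ℝ × S)} (hB : MeasurableSet B) (s : ℝ) :
    P.real {ω | (s + Z ω, η ω) ∈ B} =
      hermiteSmoothing (fun u => (P.map η).real (Prod.mk u ⁻¹' B)) 0 s := by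
  have hlaw : P.map (fun ω => s + Z ω) = gaussianReal s 1 := by
    change P.map ((s + ·) ∘ Z) = _
    rw [← Measure.map_map (measurable_const_add s) hZ, hgauss, gaussianReal_map_const_add,
      zero_add]
  rw [measureReal_mem_eq_integral (X := fun ω => s + Z ω) (hZ.const_add s) hη
    (hindep.comp (measurable_const_add s) measurable_id) hB, hlaw,
    integral_gaussianReal_eq_integral_smul one_ne_zero, hermiteSmoothing]
  congr 1 with u
  simp [hermiteKernel, gaussianPDFReal_sub, mul_comm]

end

/-- **Lemma 3.4** (Gaussian smoothing): `h(x) := P(x + bZ ∈ A(η))` is twice continuously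
differentiable, with Taylor remainder bounded by `0.4 |y/b|³`. -/
theorem smoothing_lemma_gaussian
    {Ω' S : Type} [MeasurableSpace Ω'] [MeasurableSpace S]
    (P : Measure Ω') [IsProbabilityMeasure P]
    (η : Ω' → S) (hη : Measurable η)
    (Z : Ω' → ℝ) (hZ : Measurable Z)
    (hgauss : Measure.map Z P = gaussianReal 0 1)
    (hindep : IndepFun Z η P)
    (A : Set (ℝ × S)) (hA : MeasurableSet A) (b : ℝ) (hb : b ≠ 0) :
    ∃ h' h'' : ℝ → ℝ,
      (∀ x, HasDerivAt (fun x => (P {ω | (x + b * Z ω, η ω) ∈ A}).toReal) (h' x) x) ∧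
      (∀ x, HasDerivAt h' (h'' x) x) ∧ Continuous h'' ∧
      ∀ x y,
        |(P {ω | (x + y + b * Z ω, η ω) ∈ A}).toReal -
            (P {ω | (x + b * Z ω, η ω) ∈ A}).toReal - y * h' x - y ^ 2 * h'' x / 2|
          ≤ 0.4 * |y / b| ^ 3 := by
  have : IsProbabilityMeasure (P.map η) := Measure.isProbabilityMeasure_map hη.aemeasurable
  set B := (fun p : ℝ × S => (b * p.1, p.2)) ⁻¹' A
  have hB : MeasurableSet B := ((measurable_fst.const_mul b).prodMk measurable_snd) hA
  set w := fun u => (P.map η).real (Prod.mk u ⁻¹' B)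
  have hw : Measurable w := (measurable_measure_prodMk_left hB).ennreal_toReal
  have hw1 (u : ℝ) : |w u| ≤ 1 := (abs_of_nonneg measureReal_nonneg).trans_le measureReal_le_one
  set F := hermiteSmoothing w
  have hh (x : ℝ) : (P {ω | (x + b * Z ω, η ω) ∈ A}).toReal = F 0 (x / b) := by
    rw [← measureReal_def]
    refine Eq.trans ?_ (measureReal_add_mem_eq_hermiteSmoothing hη hZ hgauss hindep hB (x / b))
    congr with ω
    simp [B, mul_add, mul_div_cancel₀ x hb]
  have hscale (n : ℕ) (x : ℝ) :
      HasDerivAt (fun x => F n (x / b)) (F (n + 1) (x / b) / b) x := by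
    exact ((hasDerivAt_hermiteSmoothing hw hw1 n (x / b)).comp x
      ((hasDerivAt_id x).div_const b)).congr_deriv (mul_one_div _ _)
  refine ⟨fun x => F 1 (x / b) / b, fun x => F 2 (x / b) / b ^ 2, fun x => ?_, fun x => ?_, ?_,
    fun x y => ?_⟩
  · simpa only [hh] using hscale 0 x
  · simpa [pow_two, div_div] using (hscale 1 x).div_const b
  · exact ((differentiable_hermiteSmoothing hw hw1 2).continuous.comp
      (continuous_id.div_const b)).div_const _
  · rw [hh, hh, add_div]
    calc _ = |F 0 (x / b + y / b) - F 0 (x / b) - y / b * F 1 (x / b)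
            - (y / b) ^ 2 * F 2 (x / b) / 2| := by field_simp
      _ ≤ 0.4 * |y / b| ^ 3 := abs_hermiteSmoothing_taylor_le hw hw1 _ _
end

section
/- Lemma 4.1, inclusion part (enlargement chain of sets in C[0,1]). Fix n ≥ 1, r > 0, ρ > 0 and a set D ⊆ C[0,1]. Define e_i : [0,1] → ℝ (i = 0,…,n+1) by e_i(t) := 0 if t ≤ (i−1)/n, e_i(t) := nt − (i−1) if (i−1)/n ≤ t ≤ i/n, and e_i(t) := 1 if t ≥ i/n. Define D_{n+1} := D^ρ and, recursively for k = n, n−1, …, 1, 0: D_k := {ỹ + z·(e_k − e_{k+1}) : ỹ ∈ D_{k+1}, z ∈ ℝ, |z| < r} ⊆ C[0,1]. Then D^ρ = D_{n+1} ⊆ D_n ⊆ ⋯ ⊆ D_1 ⊆ D_0 ⊆ D^{ρ+r}. -/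
open Set

noncomputable section

/-- The function `e_i(t) = min(max(nt - (i-1), 0), 1)` as a continuous map on `[0,1]`. -/
def efunC (n i : ℕ) : C(Set.Icc (0:ℝ) 1, ℝ) :=
  ⟨fun t => min (max ((n : ℝ) * t - ((i : ℝ) - 1)) 0) 1, by
    exact (((continuous_const.mul continuous_subtype_val).sub continuous_const).max
      continuous_const).min continuous_const⟩

/-- `ε`-enlargement of a set in `C[0,1]` in the sup norm. -/
def enl (D : Set C(Set.Icc (0:ℝ) 1, ℝ)) (ε : ℝ) : Set C(Set.Icc (0:ℝ) 1, ℝ) :=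
  {x | ∃ y ∈ D, ‖x - y‖ < ε}

/-- The enlargement chain of (4.13): `Dchain j` is the set `D_{n+1-j}`; thus `Dchain 0 = D^ρ`
and `D_k` is obtained from `D_{k+1}` by adding multiples `z (e_k - e_{k+1})`, `|z| < r`. -/
def Dchain (n : ℕ) (r ρ : ℝ) (D : Set C(Set.Icc (0:ℝ) 1, ℝ)) :
    ℕ → Set C(Set.Icc (0:ℝ) 1, ℝ)
  | 0 => enl D ρ
  | j + 1 => {x | ∃ y ∈ Dchain n r ρ D j, ∃ z : ℝ, |z| < r ∧
      x = y + z • (efunC n (n - j) - efunC n (n - j + 1))}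

lemma efunC_nonneg (n i : ℕ) (t : Set.Icc (0:ℝ) 1) : 0 ≤ efunC n i t := by
  simp only [efunC, ContinuousMap.coe_mk]
  exact le_min (le_max_right _ _) zero_le_one

lemma efunC_le_one (n i : ℕ) (t : Set.Icc (0:ℝ) 1) : efunC n i t ≤ 1 := by
  simp [efunC]

lemma efunC_anti (n : ℕ) {i j : ℕ} (hij : i ≤ j) (t : Set.Icc (0:ℝ) 1) :
    efunC n j t ≤ efunC n i t := by
  simp only [efunC, ContinuousMap.coe_mk]
  apply min_le_min _ le_rfl
  apply max_le_max _ le_rfl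
  have : (i : ℝ) ≤ (j : ℝ) := Nat.cast_le.mpr hij
  linarith

lemma Dchain_key (n : ℕ) (r ρ : ℝ) (hr : 0 < r) (hρ : 0 < ρ)
    (D : Set C(Set.Icc (0:ℝ) 1, ℝ)) :
    ∀ j, j ≤ n + 1 → ∀ x ∈ Dchain n r ρ D j, ∃ y ∈ D, ∃ m, 0 ≤ m ∧ m < r ∧
      ∀ t, |x t - y t| ≤ ρ + m * (efunC n (n + 1 - j) t - efunC n (n + 1) t) := by
  intro j
  induction j with
  | zero =>
    rintro - x ⟨y, hy, hxy⟩
    refine ⟨y, hy, 0, le_rfl, hr, fun t => ?_⟩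
    simp only [Nat.sub_zero, sub_self, mul_zero, add_zero]
    calc |x t - y t| = ‖(x - y) t‖ := by simp [Real.norm_eq_abs]
      _ ≤ ‖x - y‖ := ContinuousMap.norm_coe_le_norm _ _
      _ ≤ ρ := le_of_lt hxy
  | succ j ih =>
    rintro hj x ⟨y', hy', z, hz, rfl⟩
    have hjn : j ≤ n := Nat.lt_succ_iff.mp hj
    obtain ⟨y, hy, m, hm0, hmr, hm⟩ := ih (le_of_lt hj) y' hy'
    refine ⟨y, hy, max m |z|, le_trans hm0 (le_max_left _ _),
      max_lt hmr hz, fun t => ?_⟩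
    have h1 : n + 1 - j = n - j + 1 := by omega
    have h2 : n + 1 - (j + 1) = n - j := by omega
    rw [h2]
    have ha : efunC n (n + 1) t ≤ efunC n (n - j + 1) t :=
      efunC_anti n (by omega) t
    have hb : efunC n (n - j + 1) t ≤ efunC n (n - j) t :=
      efunC_anti n (by omega) t
    have hm' := hm t
    rw [h1] at hm'
    have hzb : |z * (efunC n (n - j) t - efunC n (n - j + 1) t)|
        ≤ |z| * (efunC n (n - j) t - efunC n (n - j + 1) t) := by
      rw [abs_mul]
      exact mul_le_mul_of_nonneg_left (le_of_eq (abs_of_nonneg (by linarith))) (abs_nonneg z)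
    have key : |(y' + z • (efunC n (n - j) - efunC n (n - j + 1))) t - y t|
        ≤ |y' t - y t| + |z * (efunC n (n - j) t - efunC n (n - j + 1) t)| := by
      simp only [ContinuousMap.add_apply, ContinuousMap.smul_apply,
        ContinuousMap.sub_apply, smul_eq_mul]
      calc |y' t + z * (efunC n (n - j) t - efunC n (n - j + 1) t) - y t|
          = |(y' t - y t) + z * (efunC n (n - j) t - efunC n (n - j + 1) t)| := by
            ring_nf
        _ ≤ _ := abs_add_le _ _
    have hmax1 : m ≤ max m |z| := le_max_left _ _
    have hmax2 : |z| ≤ max m |z| := le_max_right _ _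
    have habs : 0 ≤ |z| := abs_nonneg z
    calc |(y' + z • (efunC n (n - j) - efunC n (n - j + 1))) t - y t|
        ≤ |y' t - y t| + |z * (efunC n (n - j) t - efunC n (n - j + 1) t)| := key
      _ ≤ (ρ + m * (efunC n (n - j + 1) t - efunC n (n + 1) t))
          + |z| * (efunC n (n - j) t - efunC n (n - j + 1) t) := by
            exact add_le_add hm' (hzb.trans le_rfl)
      _ ≤ ρ + max m |z| * (efunC n (n - j) t - efunC n (n + 1) t) := by
            nlinarith [mul_le_mul_of_nonneg_right hmax1 (by linarith : (0:ℝ) ≤ efunC n (n - j + 1) t - efunC n (n + 1) t),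
              mul_le_mul_of_nonneg_right hmax2 (by linarith : (0:ℝ) ≤ efunC n (n - j) t - efunC n (n - j + 1) t)]

/-- **Lemma 4.1, inclusion part**: `D^ρ = D_{n+1} ⊆ D_n ⊆ ⋯ ⊆ D_1 ⊆ D_0 ⊆ D^{ρ+r}`. -/
theorem Dchain_inclusions (n : ℕ) (hn : 1 ≤ n) (r ρ : ℝ) (hr : 0 < r) (hρ : 0 < ρ)
    (D : Set C(Set.Icc (0:ℝ) 1, ℝ)) :
    Dchain n r ρ D 0 = enl D ρ ∧
    (∀ j ≤ n, Dchain n r ρ D j ⊆ Dchain n r ρ D (j + 1)) ∧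
    Dchain n r ρ D (n + 1) ⊆ enl D (ρ + r) := by
  refine ⟨rfl, fun j hj x hx => ⟨x, hx, 0, by simpa using hr, by simp⟩, fun x hx => ?_⟩
  obtain ⟨y, hy, m, hm0, hmr, hm⟩ := Dchain_key n r ρ hr hρ D (n + 1) le_rfl x hx
  refine ⟨y, hy, ?_⟩
  have hnorm : ‖x - y‖ ≤ ρ + m := by
    apply ContinuousMap.norm_le _ (by linarith) |>.mpr
    intro t
    have := hm t
    have h1 : efunC n (n + 1 - (n + 1)) t - efunC n (n + 1) t ≤ 1 := by
      have := efunC_le_one n (n + 1 - (n + 1)) t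
      have := efunC_nonneg n (n + 1) t
      linarith
    simp only [ContinuousMap.sub_apply]
    rw [Real.norm_eq_abs]
    nlinarith
  linarith

end
end
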